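/- arXiv:2408.13264 — 5 statements merged into one kernel-verified Lean document; each statement's English description precedes it below -/
import Mathlib

section
/- Let (X, δ) be a metric-like space, let I be an admissible ideal of subsets of ℕ, and let (x_n) be a sequence in X. If every subsequence of (x_n) (i.e. every sequence (x_{n_k}) with (n_k) strictly increasing) has a further subsequence that is I-convergent to x₀ ∈ X, then (x_n) itself is I-convergent to x₀. -/
open Filter Topology

/-- A metric-like space structure on `X`. -/
structure MetricLike (X : Type*) where
  d : X → X → ℝ
  nonneg : ∀ x y, 0 ≤ d x y
  eq_of_eq_zero : ∀ x y, d x y = 0 → x = y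
  symm : ∀ x y, d x y = d y x
  triangle : ∀ x y z, d x y ≤ d x z + d z y

/-- `I` is an ideal of subsets of `ℕ`. -/
def IsIdeal (I : Set (Set ℕ)) : Prop :=
  ∅ ∈ I ∧ (∀ A B : Set ℕ, A ∈ I → B ∈ I → A ∪ B ∈ I) ∧
    (∀ A B : Set ℕ, A ∈ I → B ⊆ A → B ∈ I)

/-- `I` is an admissible ideal of subsets of `ℕ`. -/
def IsAdmissibleIdeal (I : Set (Set ℕ)) : Prop :=
  IsIdeal I ∧ (Set.univ : Set ℕ) ∉ I ∧ ∀ n : ℕ, ({n} : Set ℕ) ∈ I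

/-- Usual convergence of a sequence in a metric-like space. -/
def MLConv {X : Type*} (δ : MetricLike X) (x : ℕ → X) (x₀ : X) : Prop :=
  ∀ ε : ℝ, 0 < ε → ∃ k₀ : ℕ, ∀ n ≥ k₀, |δ.d (x n) x₀ - δ.d x₀ x₀| < ε

/-- `I`-convergence of a sequence in a metric-like space. -/
def MLIConv (I : Set (Set ℕ)) {X : Type*} (δ : MetricLike X) (x : ℕ → X) (x₀ : X) : Prop :=
  ∀ ε : ℝ, 0 < ε → {n : ℕ | ε ≤ |δ.d (x n) x₀ - δ.d x₀ x₀|} ∈ I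

/-- `I*`-convergence of a sequence in a metric-like space: there is a set
`M = {n₁ < n₂ < …}` in the filter `F(I)` (i.e. with complement in `I`) such that
`δ(x_{n_k}, x₀) → δ(x₀, x₀)`. -/
def MLIStarConv (I : Set (Set ℕ)) {X : Type*} (δ : MetricLike X) (x : ℕ → X) (x₀ : X) : Prop :=
  ∃ M : Set ℕ, Mᶜ ∈ I ∧ ∃ nk : ℕ → ℕ, StrictMono nk ∧ Set.range nk = M ∧
    Tendsto (fun k => δ.d (x (nk k)) x₀) atTop (𝓝 (δ.d x₀ x₀))

/-- The open `δ`-ball with centre `c` and radius `ε`. -/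
def MLBall {X : Type*} (δ : MetricLike X) (c : X) (ε : ℝ) : Set X :=
  {x : X | |δ.d x c - δ.d c c| < ε}

/-- The `T₀` separation axiom for a metric-like space. -/
def MLT0 {X : Type*} (δ : MetricLike X) : Prop :=
  ∀ x y : X, x ≠ y → ∃ (c : X) (ε : ℝ), 0 < ε ∧
    ((x ∈ MLBall δ c ε ∧ y ∉ MLBall δ c ε) ∨ (y ∈ MLBall δ c ε ∧ x ∉ MLBall δ c ε))

/-- `x₀` is a limit point of the metric-like space `X`. -/
def MLLimitPoint {X : Type*} (δ : MetricLike X) (x₀ : X) : Prop :=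
  ∀ r : ℝ, 0 < r → (MLBall δ x₀ r ∩ {x₀}ᶜ).Nonempty

/-- `x₀` is an isolated point of the metric-like space `X`. -/
def MLIsolated {X : Type*} (δ : MetricLike X) (x₀ : X) : Prop :=
  ∃ r : ℝ, 0 < r ∧ MLBall δ x₀ r = {x₀}

/-- The condition (AP) for an ideal of subsets of `ℕ`. -/
def HasAP (I : Set (Set ℕ)) : Prop :=
  ∀ A : ℕ → Set ℕ, (∀ j, A j ∈ I) → (∀ i j, i ≠ j → Disjoint (A i) (A j)) →
    ∃ B : ℕ → Set ℕ, (∀ j, (symmDiff (A j) (B j)).Finite) ∧ (⋃ j, B j) ∈ I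

/- Enumerating a set `A ∉ I` gives a subsequence lying entirely in `A`; its bad set along any
further subsequence is all of `ℕ`, which an admissible ideal does not contain. -/

theorem IsAdmissibleIdeal.mem_of_finite {I : Set (Set ℕ)} (hI : IsAdmissibleIdeal I)
    {A : Set ℕ} (hA : A.Finite) : A ∈ I := by
  obtain ⟨⟨hempty, hunion, -⟩, -, hsingle⟩ := hI
  induction A, hA using Set.Finite.induction_on with
  | empty => exact hempty
  | @insert a s _ _ ih => simpa only [Set.singleton_union] using hunion _ _ (hsingle a) ih

theorem IsAdmissibleIdeal.infinite_of_not_mem {I : Set (Set ℕ)} (hI : IsAdmissibleIdeal I)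
    {A : Set ℕ} (hA : A ∉ I) : A.Infinite :=
  fun hfin => hA (hI.mem_of_finite hfin)

theorem not_MLIConv_of_forall_le {I : Set (Set ℕ)} (hI : (Set.univ : Set ℕ) ∉ I)
    {X : Type*} (δ : MetricLike X) (y : ℕ → X) (x₀ : X) {ε : ℝ} (hε : 0 < ε)
    (hy : ∀ k, ε ≤ |δ.d (y k) x₀ - δ.d x₀ x₀|) : ¬ MLIConv I δ y x₀ := by
  intro hconv
  have hbad : {k : ℕ | ε ≤ |δ.d (y k) x₀ - δ.d x₀ x₀|} = Set.univ :=
    Set.eq_univ_of_forall hy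
  exact hI (hbad ▸ hconv ε hε)

theorem ideal_convergent_of_subseq_of_subseq {X : Type*} (δ : MetricLike X)
    (I : Set (Set ℕ)) (hI : IsAdmissibleIdeal I) (x : ℕ → X) (x₀ : X)
    (h : ∀ nk : ℕ → ℕ, StrictMono nk →
      ∃ mk : ℕ → ℕ, StrictMono mk ∧ MLIConv I δ (fun k => x (nk (mk k))) x₀) :
    MLIConv I δ x x₀ := by
  intro ε hε
  by_contra hA
  set A := {n : ℕ | ε ≤ |δ.d (x n) x₀ - δ.d x₀ x₀|}
  have hAinf : A.Infinite := hI.infinite_of_not_mem hA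
  obtain ⟨mk, -, hconv⟩ := h (Nat.nth A) (Nat.nth_strictMono hAinf)
  exact not_MLIConv_of_forall_le hI.2.1 δ _ x₀ hε
    (fun k => Nat.nth_mem_of_infinite hAinf (mk k)) hconv
end

section
/- Let (X, δ) be a metric-like space, let I be an admissible ideal of subsets of ℕ, and let (x_n) be a sequence in X. If (x_n) is I*-convergent to x₀ ∈ X, then (x_n) is I-convergent to x₀. -/
/-!
For `ε > 0`, the indices with `|δ(xₙ, x₀) - δ(x₀, x₀)| ≥ ε` lie in `Mᶜ` together with the
finitely many `n_k` before the subsequence enters the `ε`-window; an admissible ideal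
contains all finite sets and is closed under unions and subsets.
-/

open Filter Topology

theorem IsIdeal.mem_of_finite {I : Set (Set ℕ)} (hI : IsIdeal I)
    (hsingleton : ∀ n : ℕ, ({n} : Set ℕ) ∈ I) {S : Set ℕ} (hS : S.Finite) : S ∈ I := by
  obtain ⟨hempty, hunion, -⟩ := hI
  induction S, hS using Set.Finite.induction_on with
  | empty => exact hempty
  | @insert a s _ _ ih => rw [Set.insert_eq]; exact hunion _ _ (hsingleton a) ih

theorem exists_finite_setOf_subset_compl_range_union {nk : ℕ → ℕ} (P : ℕ → Prop)
    (h : ∀ᶠ k in atTop, ¬ P (nk k)) :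
    ∃ F : Set ℕ, F.Finite ∧ {n | P n} ⊆ (Set.range nk)ᶜ ∪ F := by
  obtain ⟨K, hK⟩ := eventually_atTop.mp h
  refine ⟨nk '' Set.Iio K, (Set.finite_Iio K).image nk, ?_⟩
  rintro n hn
  by_cases hrange : n ∈ Set.range nk
  · obtain ⟨k, rfl⟩ := hrange
    exact Or.inr ⟨k, not_le.mp fun hk => hK k hk hn, rfl⟩
  · exact Or.inl hrange

theorem ideal_star_convergent_imp_ideal_convergent {X : Type*} (δ : MetricLike X)
    (I : Set (Set ℕ)) (hI : IsAdmissibleIdeal I) (x : ℕ → X) (x₀ : X)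
    (h : MLIStarConv I δ x x₀) : MLIConv I δ x x₀ := by
  obtain ⟨M, hMc, nk, -, rfl, htend⟩ := h
  intro ε hε
  have hclose : ∀ᶠ k in atTop, ¬ ε ≤ |δ.d (x (nk k)) x₀ - δ.d x₀ x₀| := by
    filter_upwards [Metric.tendsto_nhds.mp htend ε hε] with k hk
    exact not_le.mpr hk
  obtain ⟨F, hF, hbad⟩ := exists_finite_setOf_subset_compl_range_union
    (fun n => ε ≤ |δ.d (x n) x₀ - δ.d x₀ x₀|) hclose
  obtain ⟨hideal, -, hsingleton⟩ := hI
  have hFI := hideal.mem_of_finite hsingleton hF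
  obtain ⟨-, hunion, hsubset⟩ := hideal
  exact hsubset _ _ (hunion _ _ hMc hFI) hbad
end

section
/- Let (X, δ) be a metric-like space, let x₀ be an isolated point of X, and let I be an admissible ideal of subsets of ℕ. If a sequence (x_n) in X is I-convergent to x₀, then (x_n) is I*-convergent to x₀. -/
open Filter Topology

/-!
Off the `I`-small set `A = {n | r₀ ≤ |δ(xₙ, x₀) − δ(x₀, x₀)|}`, where `r₀` isolates `x₀`, the
sequence is constantly `x₀`. Admissibility makes the complement of `A` infinite, so enumerating
it increasingly gives a subsequence indexed by a set of `F(I)` along which the sequence is constant.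
-/

namespace IsAdmissibleIdeal

variable {I : Set (Set ℕ)}

theorem finite_mem (hI : IsAdmissibleIdeal I) {s : Set ℕ} (hs : s.Finite) : s ∈ I := by
  obtain ⟨⟨hempty, hunion, -⟩, -, hsingle⟩ := hI
  refine Set.Finite.induction_on s hs hempty fun {a t} _ _ ht => ?_
  rw [Set.insert_eq]
  exact hunion _ _ (hsingle a) ht

theorem compl_infinite_of_mem (hI : IsAdmissibleIdeal I) {A : Set ℕ} (hA : A ∈ I) :
    Aᶜ.Infinite := fun hfin => by
  have hunion := hI.1.2.1 _ _ hA (hI.finite_mem hfin)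
  rw [Set.union_compl_self] at hunion
  exact hI.2.1 hunion

end IsAdmissibleIdeal

section MetricLike

variable {X : Type*} {δ : MetricLike X} {x : ℕ → X} {x₀ : X} {I : Set (Set ℕ)}

theorem MLIConv.exists_mem_eq_of_isolated (h : MLIConv I δ x x₀) (hx₀ : MLIsolated δ x₀) :
    ∃ A ∈ I, ∀ n ∉ A, x n = x₀ := by
  obtain ⟨r₀, hr₀, hball⟩ := hx₀
  refine ⟨_, h r₀ hr₀, fun n hn => ?_⟩
  have hmem : x n ∈ MLBall δ x₀ r₀ := not_le.mp (Set.notMem_ofPred_iff.mp hn)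
  rwa [hball] at hmem

theorem MLIStarConv.of_forall_notMem_eq (hI : IsAdmissibleIdeal I) {A : Set ℕ} (hA : A ∈ I)
    (hx : ∀ n ∉ A, x n = x₀) : MLIStarConv I δ x x₀ := by
  have hinf := hI.compl_infinite_of_mem hA
  refine ⟨Aᶜ, by rwa [compl_compl], Nat.nth (· ∈ Aᶜ), Nat.nth_strictMono hinf,
    Nat.range_nth_of_infinite hinf, ?_⟩
  have hconst : (fun k => δ.d (x (Nat.nth (· ∈ Aᶜ) k)) x₀) = fun _ => δ.d x₀ x₀ :=
    funext fun k => by rw [hx _ (Nat.nth_mem_of_infinite (p := (· ∈ Aᶜ)) hinf k)]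
  rw [hconst]
  exact tendsto_const_nhds

end MetricLike

theorem ideal_convergent_imp_ideal_star_convergent_of_isolated {X : Type*}
    (δ : MetricLike X) (x₀ : X) (hx₀ : MLIsolated δ x₀)
    (I : Set (Set ℕ)) (hI : IsAdmissibleIdeal I) (x : ℕ → X)
    (h : MLIConv I δ x x₀) : MLIStarConv I δ x x₀ := by
  obtain ⟨A, hA, hx⟩ := h.exists_mem_eq_of_isolated hx₀
  exact MLIStarConv.of_forall_notMem_eq hI hA hx
end

section
/- There exist a metric-like space (X, δ), an admissible ideal I of subsets of ℕ, a sequence (x_n) in X, and a point x₀ ∈ X such that (x_n) is I-convergent to x₀ but (x_n) does not converge to x₀ in the usual sense. In other words, the converse of the implication 'convergence implies I-convergence' fails in general. -/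
open Filter Topology

theorem ideal_convergent_not_convergent :
    ∃ (X : Type) (δ : MetricLike X) (I : Set (Set ℕ)) (x : ℕ → X) (x₀ : X),
      IsAdmissibleIdeal I ∧ MLIConv I δ x x₀ ∧ ¬ MLConv δ x x₀ := by
  refine ⟨ℝ, ⟨fun a b => |a - b|, fun a b => abs_nonneg _,
      fun a b h => by simpa [sub_eq_zero] using abs_eq_zero.mp h,
      fun a b => abs_sub_comm a b, fun a b c => abs_sub_le a c b⟩,
    {A : Set ℕ | (A ∩ {n | Odd n}).Finite},
    fun n => if Even n then 1 else 0, 0, ⟨⟨?_, ?_, ?_⟩, ?_, ?_⟩, ?_, ?_⟩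
  · simp
  · intro A B hA hB
    simpa [Set.union_inter_distrib_right] using hA.union hB
  · intro A B hA hBA
    exact hA.subset (Set.inter_subset_inter_left _ hBA)
  · intro h
    simp only [Set.mem_setOf_eq, Set.univ_inter] at h
    have : ({n : ℕ | Odd n}).Infinite := by
      apply Set.infinite_of_injective_forall_mem (f := fun n : ℕ => 2 * n + 1)
      · intro a b hab; simpa using hab
      · intro n; exact ⟨n, rfl⟩
    exact this h
  · intro n
    exact (Set.finite_singleton n).subset (Set.inter_subset_left)
  · intro ε hε
    refine Set.Finite.subset (Set.finite_empty) ?_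
    rintro n ⟨hn, hodd⟩
    simp only [Set.mem_setOf_eq] at hn hodd
    rw [← Nat.not_even_iff_odd] at hodd
    simp [hodd] at hn
    linarith
  · intro h
    obtain ⟨k₀, hk⟩ := h (1/2) (by norm_num)
    have := hk (2 * k₀) (by omega)
    simp [Nat.even_mul] at this
    linarith
end

section
/- There exist a metric-like space (X, δ), an admissible ideal I of subsets of ℕ, a sequence (x_n) in X, and a point x₀ ∈ X such that some subsequence of (x_n) converges to x₀ in the usual sense, but (x_n) is not I-convergent to x₀. In other words, the converse of the implication 'I-convergence implies the existence of a convergent subsequence' fails in general. -/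
open Filter Topology

theorem convergent_subseq_not_ideal_convergent :
    ∃ (X : Type) (δ : MetricLike X) (I : Set (Set ℕ)) (x : ℕ → X) (x₀ : X),
      IsAdmissibleIdeal I ∧
      (∃ nk : ℕ → ℕ, StrictMono nk ∧ MLConv δ (fun k => x (nk k)) x₀) ∧
      ¬ MLIConv I δ x x₀ := by
  refine ⟨ℝ, ⟨fun a b => |a - b|, fun a b => abs_nonneg _,
      fun a b h => by simpa [sub_eq_zero] using abs_eq_zero.mp h,
      fun a b => abs_sub_comm a b, fun a b c => abs_sub_le a c b⟩,
    {A | A.Finite}, (fun n => if Even n then 0 else 1), 0, ?_, ?_, ?_⟩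
  · exact ⟨⟨Set.finite_empty, fun A B hA hB => hA.union hB,
      fun A B hA hBA => hA.subset hBA⟩, Set.infinite_univ, fun n => Set.finite_singleton n⟩
  · refine ⟨fun k => 2 * k, fun a b h => by dsimp only; omega, fun ε hε => ⟨0, fun n _ => ?_⟩⟩
    simpa [Nat.even_mul] using hε
  · intro h
    have h1 := h 1 one_pos
    have hinf : {n : ℕ | ¬ Even n}.Infinite := by
      apply Set.infinite_of_not_bddAbove
      rintro ⟨b, hb⟩
      have := hb (show 2*b+1 ∈ {n : ℕ | ¬ Even n} by simp [Nat.even_add_one, Nat.even_mul])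
      omega
    apply hinf
    refine Set.Finite.subset h1 ?_
    intro n hn
    simp only [Set.mem_setOf_eq] at hn ⊢
    simp [hn]
end
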